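/- Fix N distinct points x_1 < ... < x_N in (0,1) and positive weights w_1, ..., w_N summing to at most 1. The Jacobian determinant of the map (x_1, w_1, ..., x_N, w_N) ↦ (m_1, ..., m_{2N}), where m_j = Σ_k w_k x_k^j, equals (∏_{k=1}^N w_k)·(∏_{k=1}^N x_k²)·Δ(x_1, ..., x_N)^4, where Δ(x_1,...,x_N) = ∏_{1 ≤ j < k ≤ N} (x_j − x_k) is the Vandermonde determinant. -/
import Mathlib


open Matrix

/-- The Jacobian matrix of the map `(x₁,w₁,…,x_N,w_N) ↦ (m₁,…,m_{2N})`, where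
`m_j = ∑_k w_k x_k^j`.  Row `j` corresponds to the moment `m_{j+1}`; even-indexed
columns are the `∂/∂w_k` columns (entries `x_k^{j+1}`) and odd-indexed columns are
the `∂/∂x_k` columns (entries `(j+1)·w_k·x_k^j`). -/
noncomputable def momentJacobian (N : ℕ) (x w : Fin N → ℝ) :
    Matrix (Fin (2 * N)) (Fin (2 * N)) ℝ :=
  Matrix.of fun j c =>
    if c.1 % 2 = 0 then x ⟨c.1 / 2, by omega⟩ ^ (j.1 + 1)
    else ((j.1 : ℝ) + 1) * w ⟨c.1 / 2, by omega⟩ * x ⟨c.1 / 2, by omega⟩ ^ j.1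

namespace MomentAux

open Finset Polynomial

theorem prodPair {M : Type*} [CommMonoid M] (N : ℕ) (g : Fin (2*N) → M) :
    ∏ i, g i = ∏ k : Fin N, (g ⟨2*k.1, by have := k.2; omega⟩ * g ⟨2*k.1+1, by have := k.2; omega⟩) := by
  have : ∀ k : Fin N, (g ⟨2*k.1, by have := k.2; omega⟩ * g ⟨2*k.1+1, by have := k.2; omega⟩)
      = ∏ b : Fin 2, g ⟨2*k.1+b.1, by have := k.2; have := b.2; omega⟩ := by
    intro k
    rw [Fin.prod_univ_two]
    congr 1
  simp_rw [this]
  rw [← Fintype.prod_prod_type']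
  apply Fintype.prod_bijective (fun i : Fin (2*N) => ((⟨i.1/2, by have := i.2; omega⟩ : Fin N), (⟨i.1 % 2, by omega⟩ : Fin 2)))
  · constructor
    · intro a b h
      simp only [Prod.mk.injEq, Fin.mk.injEq] at h
      exact Fin.ext (by omega)
    · rintro ⟨k, b⟩
      have hk := k.2; have hb := b.2
      refine ⟨⟨2*k.1+b.1, by omega⟩, ?_⟩
      simp only [Prod.ext_iff, Fin.ext_iff]
      constructor <;> omega
  · intro i
    congr 1
    exact Fin.ext (by simp; omega)

theorem prodIoiPair {M : Type*} [CommMonoid M] (N : ℕ) (F : Fin (2*N) → Fin (2*N) → M) :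
    ∏ i, ∏ j ∈ Finset.Ioi i, F i j
      = (∏ k : Fin N, F ⟨2*k.1, by have := k.2; omega⟩ ⟨2*k.1+1, by have := k.2; omega⟩) *
        ∏ k : Fin N, ∏ l ∈ Finset.Ioi k,
          (F ⟨2*k.1, by have := k.2; omega⟩ ⟨2*l.1, by have := l.2; omega⟩ *
           F ⟨2*k.1, by have := k.2; omega⟩ ⟨2*l.1+1, by have := l.2; omega⟩ *
           (F ⟨2*k.1+1, by have := k.2; omega⟩ ⟨2*l.1, by have := l.2; omega⟩ *
            F ⟨2*k.1+1, by have := k.2; omega⟩ ⟨2*l.1+1, by have := l.2; omega⟩)) := by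
  rw [Finset.prod_sigma' univ (fun i => Finset.Ioi i) (fun i j => F i j)]
  rw [← Finset.prod_filter_mul_prod_filter_not
    ((univ : Finset (Fin (2*N))).sigma fun i => Finset.Ioi i)
    (fun p => p.2.1/2 = p.1.1/2) (fun p => F p.1 p.2)]
  congr 1
  · -- same-block pairs
    refine Finset.prod_bij'
      (fun p _ => (⟨p.1.1/2, by have := p.1.2; omega⟩ : Fin N))
      (fun (k : Fin N) _ =>
        (⟨⟨2*k.1, by have := k.2; omega⟩, ⟨2*k.1+1, by have := k.2; omega⟩⟩ :
          Σ _ : Fin (2*N), Fin (2*N)))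
      (fun p hp => mem_univ _) ?_ ?_ ?_ ?_
    · intro k _
      simp only [mem_filter, mem_sigma, mem_univ, mem_Ioi, true_and]
      constructor
      · simp
      · simp; omega
    · rintro ⟨p1, p2⟩ hp
      simp only [mem_filter, mem_sigma, mem_univ, mem_Ioi, Fin.lt_def, true_and] at hp
      have h1 : (⟨2*(p1.1/2), by have := p1.2; omega⟩ : Fin (2*N)) = p1 :=
        Fin.ext (by simp; omega)
      have h2 : (⟨2*(p1.1/2)+1, by have := p1.2; omega⟩ : Fin (2*N)) = p2 :=
        Fin.ext (by simp; omega)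
      simp only [h1, h2]
    · intro k _
      apply Fin.ext
      simp
    · rintro ⟨p1, p2⟩ hp
      simp only [mem_filter, mem_sigma, mem_univ, mem_Ioi, Fin.lt_def, true_and] at hp
      have h1 : (⟨2*(p1.1/2), by have := p1.2; omega⟩ : Fin (2*N)) = p1 :=
        Fin.ext (by simp; omega)
      have h2 : (⟨2*(p1.1/2)+1, by have := p1.2; omega⟩ : Fin (2*N)) = p2 :=
        Fin.ext (by simp; omega)
      simp only [h1, h2]
  · -- cross-block pairs
    have expand : ∀ (k : Fin N), ∀ l ∈ Finset.Ioi k,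
        (F ⟨2*k.1, by have := k.2; omega⟩ ⟨2*l.1, by have := l.2; omega⟩ *
         F ⟨2*k.1, by have := k.2; omega⟩ ⟨2*l.1+1, by have := l.2; omega⟩ *
         (F ⟨2*k.1+1, by have := k.2; omega⟩ ⟨2*l.1, by have := l.2; omega⟩ *
          F ⟨2*k.1+1, by have := k.2; omega⟩ ⟨2*l.1+1, by have := l.2; omega⟩))
        = ∏ q : Fin 2 × Fin 2,
            F ⟨2*k.1+q.1.1, by have := k.2; have := q.1.2; omega⟩
              ⟨2*l.1+q.2.1, by have := l.2; have := q.2.2; omega⟩ := by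
      intro k l _
      rw [Fintype.prod_prod_type]
      rw [Fin.prod_univ_two]
      congr 1 <;> rw [Fin.prod_univ_two] <;> congr 1 <;> congr 1 <;> apply Fin.ext <;> simp
    rw [show (∏ k : Fin N, ∏ l ∈ Finset.Ioi k,
          (F ⟨2*k.1, by have := k.2; omega⟩ ⟨2*l.1, by have := l.2; omega⟩ *
           F ⟨2*k.1, by have := k.2; omega⟩ ⟨2*l.1+1, by have := l.2; omega⟩ *
           (F ⟨2*k.1+1, by have := k.2; omega⟩ ⟨2*l.1, by have := l.2; omega⟩ *
            F ⟨2*k.1+1, by have := k.2; omega⟩ ⟨2*l.1+1, by have := l.2; omega⟩)))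
        = ∏ k : Fin N, ∏ l ∈ Finset.Ioi k, ∏ q : Fin 2 × Fin 2,
            F ⟨2*k.1+q.1.1, by have := k.2; have := q.1.2; omega⟩
              ⟨2*l.1+q.2.1, by have := l.2; have := q.2.2; omega⟩
      from Finset.prod_congr rfl (fun k _ => Finset.prod_congr rfl (expand k))]
    rw [Finset.prod_sigma' univ (fun k => Finset.Ioi k)]
    rw [← Finset.prod_product'
      (s := (univ : Finset (Fin N)).sigma fun k => Finset.Ioi k)
      (t := (univ : Finset (Fin 2 × Fin 2)))]
    refine Finset.prod_bij'
      (fun p _ => (((⟨⟨p.1.1/2, by have := p.1.2; omega⟩,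
                     ⟨p.2.1/2, by have := p.2.2; omega⟩⟩ : Σ _ : Fin N, Fin N)),
                   ((⟨p.1.1 % 2, by omega⟩ : Fin 2), (⟨p.2.1 % 2, by omega⟩ : Fin 2))))
      (fun q _ => (⟨⟨2*q.1.1.1+q.2.1.1, by have := q.1.1.2; have := q.2.1.2; omega⟩,
                    ⟨2*q.1.2.1+q.2.2.1, by have := q.1.2.2; have := q.2.2.2; omega⟩⟩ :
          Σ _ : Fin (2*N), Fin (2*N)))
      ?_ ?_ ?_ ?_ ?_
    · rintro ⟨p1, p2⟩ hp
      simp only [mem_filter, mem_sigma, mem_univ, mem_Ioi, Fin.lt_def, true_and] at hp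
      simp only [mem_product, mem_sigma, mem_univ, mem_Ioi, true_and, and_true]
      simp
      omega
    · rintro ⟨⟨k, l⟩, b, c⟩ hq
      simp only [mem_product, mem_sigma, mem_univ, mem_Ioi, Fin.lt_def, true_and, and_true] at hq
      simp only [mem_filter, mem_sigma, mem_univ, mem_Ioi, true_and]
      have hb := b.2; have hc := c.2
      exact ⟨Fin.mk_lt_mk.mpr (by omega), by omega⟩
    · rintro ⟨p1, p2⟩ hp
      simp only [mem_filter, mem_sigma, mem_univ, mem_Ioi, Fin.lt_def, true_and] at hp
      have h1 : (⟨2*(p1.1/2)+p1.1%2, by have := p1.2; omega⟩ : Fin (2*N)) = p1 :=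
        Fin.ext (by simp; omega)
      have h2 : (⟨2*(p2.1/2)+p2.1%2, by have := p2.2; omega⟩ : Fin (2*N)) = p2 :=
        Fin.ext (by simp; omega)
      simp only [h1, h2]
    · rintro ⟨⟨k, l⟩, b, c⟩ hq
      have hb := b.2; have hc := c.2
      have h1 : ((2*k.1+b.1)/2) = k.1 := by omega
      have h2 : ((2*l.1+c.1)/2) = l.1 := by omega
      have h3 : ((2*k.1+b.1)%2) = b.1 := by omega
      have h4 : ((2*l.1+c.1)%2) = c.1 := by omega
      simp only [Prod.mk.injEq]
      refine ⟨?_, Fin.ext (by simpa using h3), Fin.ext (by simpa using h4)⟩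
      have hk : (⟨(2*k.1+b.1)/2, by have := k.2; omega⟩ : Fin N) = k := Fin.ext (by simpa using h1)
      have hl : (⟨(2*l.1+c.1)/2, by have := l.2; omega⟩ : Fin N) = l := Fin.ext (by simpa using h2)
      simp only [hk, hl]
    · rintro ⟨p1, p2⟩ hp
      simp only [mem_filter, mem_sigma, mem_univ, mem_Ioi, Fin.lt_def, true_and] at hp
      have h1 : (⟨2*(p1.1/2)+p1.1%2, by have := p1.2; omega⟩ : Fin (2*N)) = p1 :=
        Fin.ext (by simp; omega)
      have h2 : (⟨2*(p2.1/2)+p2.1%2, by have := p2.2; omega⟩ : Fin (2*N)) = p2 :=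
        Fin.ext (by simp; omega)
      simp only [h1, h2]

variable (N : ℕ) (x w : Fin N → ℝ)

def k2 (i : Fin (2*N)) : Fin N := ⟨i.1/2, by have := i.2; omega⟩

@[simp] lemma val_k2 (i : Fin (2*N)) : (k2 N i).1 = i.1/2 := rfl

noncomputable def um (i : Fin (2*N)) : Polynomial ℝ :=
  Polynomial.C (x (k2 N i)) + if i.1 % 2 = 0 then 0 else Polynomial.X

noncomputable def Dm : Matrix (Fin (2*N)) (Fin (2*N)) (Polynomial ℝ) :=
  Matrix.of fun j i =>
    if i.1 % 2 = 0 then Polynomial.C (x (k2 N i)) ^ j.1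
    else ∑ r ∈ Finset.range j.1,
      Polynomial.C (x (k2 N i)) ^ r * (Polynomial.C (x (k2 N i)) + Polynomial.X) ^ (j.1 - 1 - r)

noncomputable def Em : Matrix (Fin (2*N)) (Fin (2*N)) (Polynomial ℝ) :=
  Matrix.of fun i i' =>
    if i = i' then (if i.1 % 2 = 0 then 1 else Polynomial.X)
    else if i.1 % 2 = 0 ∧ i'.1 = i.1 + 1 then 1 else 0

def E'm : Matrix (Fin (2*N)) (Fin (2*N)) ℝ :=
  Matrix.of fun i i' =>
    if i = i' then (if i.1 % 2 = 0 then x (k2 N i) else w (k2 N i) * x (k2 N i))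
    else if i.1 % 2 = 0 ∧ i'.1 = i.1 + 1 then w (k2 N i) else 0

theorem vand_eq : (Matrix.vandermonde (um N x))ᵀ = Dm N x * Em N := by
  refine Matrix.ext fun j i' => ?_
  rw [Matrix.mul_apply, Matrix.transpose_apply, Matrix.vandermonde]
  simp only [Matrix.of_apply]
  rcases Nat.mod_two_eq_zero_or_one i'.1 with h0 | h1
  · rw [Finset.sum_eq_single i']
    · have hE : Em N i' i' = 1 := by
        show (if i' = i' then (if i'.1 % 2 = 0 then 1 else Polynomial.X)
          else if i'.1 % 2 = 0 ∧ i'.1 = i'.1 + 1 then 1 else 0) = 1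
        rw [if_pos rfl, if_pos h0]
      rw [hE, mul_one]
      simp only [Dm, Matrix.of_apply, um]
      rw [if_pos h0, if_pos h0, add_zero]
    · intro b _ hb
      have : Em N b i' = 0 := by
        simp only [Em, Matrix.of_apply, if_neg hb]
        rw [if_neg]
        rintro ⟨hb0, hb1⟩
        omega
      rw [this, mul_zero]
    · intro habs; exact absurd (Finset.mem_univ i') habs
  · have hi1 : 1 ≤ i'.1 := by omega
    have ha2 : i'.1 - 1 < 2*N := by have := i'.2; omega
    have hane : (⟨i'.1 - 1, ha2⟩ : Fin (2*N)) ≠ i' := by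
      simp only [ne_eq, Fin.ext_iff]
      show ¬(i'.1 - 1 = i'.1)
      omega
    rw [show (∑ i, Dm N x j i * Em N i i')
          = ∑ i ∈ ({⟨i'.1 - 1, ha2⟩, i'} : Finset (Fin (2*N))), Dm N x j i * Em N i i' from
        (Finset.sum_subset (Finset.subset_univ _) ?_).symm]
    · rw [Finset.sum_pair hane]
      have hEa : Em N ⟨i'.1 - 1, ha2⟩ i' = 1 := by
        simp only [Em, Matrix.of_apply, if_neg hane]
        rw [if_pos ⟨show (i'.1 - 1) % 2 = 0 by omega, show i'.1 = (i'.1 - 1) + 1 by omega⟩]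
      have hEi : Em N i' i' = Polynomial.X := by
        show (if i' = i' then (if i'.1 % 2 = 0 then 1 else Polynomial.X)
          else if i'.1 % 2 = 0 ∧ i'.1 = i'.1 + 1 then 1 else 0) = Polynomial.X
        rw [if_pos rfl, if_neg (show ¬(i'.1 % 2 = 0) by omega)]
      rw [hEa, hEi, mul_one]
      have hka : k2 N (⟨i'.1 - 1, ha2⟩ : Fin (2*N)) = k2 N i' := by
        apply Fin.ext
        simp only [val_k2]
        show (i'.1 - 1)/2 = i'.1/2
        omega
      have hDa : Dm N x j ⟨i'.1 - 1, ha2⟩ = Polynomial.C (x (k2 N i')) ^ j.1 := by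
        simp only [Dm, Matrix.of_apply, hka]
        rw [if_pos (show (i'.1 - 1) % 2 = 0 by omega)]
      have hDi : Dm N x j i' = ∑ r ∈ Finset.range j.1,
          Polynomial.C (x (k2 N i')) ^ r *
            (Polynomial.C (x (k2 N i')) + Polynomial.X) ^ (j.1 - 1 - r) := by
        simp only [Dm, Matrix.of_apply]
        rw [if_neg (by omega)]
      rw [hDa, hDi]
      have hu : um N x i' = Polynomial.C (x (k2 N i')) + Polynomial.X := by
        simp only [um]
        rw [if_neg (by omega)]
      rw [hu]
      have hgeom := geom_sum₂_mul (Polynomial.C (x (k2 N i')))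
        (Polynomial.C (x (k2 N i')) + Polynomial.X) j.1
      linear_combination hgeom
    · intro b _ hb
      have : Em N b i' = 0 := by
        simp only [Finset.mem_insert, Finset.mem_singleton, not_or] at hb
        simp only [Em, Matrix.of_apply, if_neg hb.2]
        rw [if_neg]
        rintro ⟨hb0, hb1⟩
        apply hb.1
        apply Fin.ext
        show b.1 = i'.1 - 1
        omega
      rw [this, mul_zero]

theorem det_Em : (Em N).det = Polynomial.X ^ N := by
  have hut : (Em N).BlockTriangular id := by
    intro i j hij
    simp only [id_eq] at hij
    have hne : i ≠ j := by
      intro h; rw [h] at hij; exact lt_irrefl _ hij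
    show (if i = j then (if i.1 % 2 = 0 then 1 else Polynomial.X)
      else if i.1 % 2 = 0 ∧ j.1 = i.1 + 1 then 1 else 0) = 0
    rw [if_neg hne, if_neg]
    rintro ⟨h0, h1⟩
    rw [Fin.lt_def] at hij
    omega
  rw [Matrix.det_of_upperTriangular hut]
  rw [prodPair N (fun i => Em N i i)]
  have : ∀ k : Fin N, Em N ⟨2*k.1, by have := k.2; omega⟩ ⟨2*k.1, by have := k.2; omega⟩ *
      Em N ⟨2*k.1+1, by have := k.2; omega⟩ ⟨2*k.1+1, by have := k.2; omega⟩ = Polynomial.X := by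
    intro k
    have h1 : Em N ⟨2*k.1, by have := k.2; omega⟩ ⟨2*k.1, by have := k.2; omega⟩ = 1 := by
      show (if _ = _ then (if (2*k.1) % 2 = 0 then 1 else Polynomial.X) else _) = 1
      rw [if_pos rfl, if_pos (by omega)]
    have h2 : Em N ⟨2*k.1+1, by have := k.2; omega⟩ ⟨2*k.1+1, by have := k.2; omega⟩ =
        Polynomial.X := by
      show (if _ = _ then (if (2*k.1+1) % 2 = 0 then 1 else Polynomial.X) else _) = Polynomial.X
      rw [if_pos rfl, if_neg (by omega)]
    rw [h1, h2, one_mul]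
  rw [Finset.prod_congr rfl (fun k _ => this k), Finset.prod_const, Finset.card_univ,
    Fintype.card_fin]

theorem det_E'm : (E'm N x w).det = (∏ k, w k) * ∏ k, x k ^ 2 := by
  have hut : (E'm N x w).BlockTriangular id := by
    intro i j hij
    simp only [id_eq] at hij
    have hne : i ≠ j := by
      intro h; rw [h] at hij; exact lt_irrefl _ hij
    show (if i = j then _ else if i.1 % 2 = 0 ∧ j.1 = i.1 + 1 then w (k2 N i) else 0) = 0
    rw [if_neg hne, if_neg]
    rintro ⟨h0, h1⟩
    rw [Fin.lt_def] at hij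
    omega
  rw [Matrix.det_of_upperTriangular hut]
  rw [prodPair N (fun i => E'm N x w i i)]
  have key : ∀ k : Fin N,
      E'm N x w ⟨2*k.1, by have := k.2; omega⟩ ⟨2*k.1, by have := k.2; omega⟩ *
      E'm N x w ⟨2*k.1+1, by have := k.2; omega⟩ ⟨2*k.1+1, by have := k.2; omega⟩
      = w k * x k ^ 2 := by
    intro k
    have hk0 : k2 N (⟨2*k.1, by have := k.2; omega⟩ : Fin (2*N)) = k := by
      apply Fin.ext; simp only [val_k2]; show 2*k.1/2 = k.1; omega
    have hk1 : k2 N (⟨2*k.1+1, by have := k.2; omega⟩ : Fin (2*N)) = k := by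
      apply Fin.ext; simp only [val_k2]; show (2*k.1+1)/2 = k.1; omega
    have h1 : E'm N x w ⟨2*k.1, by have := k.2; omega⟩ ⟨2*k.1, by have := k.2; omega⟩ = x k := by
      show (if _ = _ then (if (2*k.1) % 2 = 0 then x (k2 N ⟨2*k.1, by have := k.2; omega⟩)
        else _) else _) = x k
      rw [if_pos rfl, if_pos (by omega), hk0]
    have h2 : E'm N x w ⟨2*k.1+1, by have := k.2; omega⟩ ⟨2*k.1+1, by have := k.2; omega⟩
        = w k * x k := by
      show (if _ = _ then (if (2*k.1+1) % 2 = 0 then _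
        else w (k2 N ⟨2*k.1+1, by have := k.2; omega⟩) * x (k2 N ⟨2*k.1+1, by have := k.2; omega⟩))
        else _) = w k * x k
      rw [if_pos rfl, if_neg (by omega), hk1]
    rw [h1, h2]
    ring
  rw [Finset.prod_congr rfl (fun k _ => key k), Finset.prod_mul_distrib]

lemma eval_Dm_even (j i : Fin (2*N)) (h : i.1 % 2 = 0) :
    Polynomial.eval 0 (Dm N x j i) = x (k2 N i) ^ j.1 := by
  simp only [Dm, Matrix.of_apply, if_pos h]
  simp

lemma eval_Dm_odd (j i : Fin (2*N)) (h : i.1 % 2 = 1) :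
    Polynomial.eval 0 (Dm N x j i) = (j.1 : ℝ) * x (k2 N i) ^ (j.1 - 1) := by
  simp only [Dm, Matrix.of_apply]
  rw [if_neg (by omega)]
  rw [Polynomial.eval_finset_sum]
  have : ∀ r ∈ Finset.range j.1,
      Polynomial.eval 0 (Polynomial.C (x (k2 N i)) ^ r *
        (Polynomial.C (x (k2 N i)) + Polynomial.X) ^ (j.1 - 1 - r))
      = x (k2 N i) ^ (j.1 - 1) := by
    intro r hr
    rw [Finset.mem_range] at hr
    simp only [Polynomial.eval_mul, Polynomial.eval_pow, Polynomial.eval_add, Polynomial.eval_C,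
      Polynomial.eval_X, add_zero]
    rw [← pow_add]
    congr 1
    omega
  rw [Finset.sum_congr rfl this, Finset.sum_const, Finset.card_range, nsmul_eq_mul]

theorem jac_eq : momentJacobian N x w = (Dm N x).map (Polynomial.eval 0) * E'm N x w := by
  refine Matrix.ext fun j i' => ?_
  rw [Matrix.mul_apply]
  show (if i'.1 % 2 = 0 then x ⟨i'.1 / 2, by have := i'.2; omega⟩ ^ (j.1 + 1)
    else ((j.1 : ℝ) + 1) * w ⟨i'.1 / 2, by have := i'.2; omega⟩ * x ⟨i'.1 / 2, by have := i'.2; omega⟩ ^ j.1) = _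
  rcases Nat.mod_two_eq_zero_or_one i'.1 with h0 | h1
  · rw [if_pos h0]
    rw [Finset.sum_eq_single i']
    · have hE : E'm N x w i' i' = x (k2 N i') := by
        show (if i' = i' then (if i'.1 % 2 = 0 then x (k2 N i') else _) else _) = x (k2 N i')
        rw [if_pos rfl, if_pos h0]
      rw [Matrix.map_apply, hE, eval_Dm_even N x j i' h0]
      rw [← pow_succ]
      rfl
    · intro b _ hb
      have : E'm N x w b i' = 0 := by
        show (if b = i' then _ else if b.1 % 2 = 0 ∧ i'.1 = b.1 + 1 then w (k2 N b) else 0) = 0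
        rw [if_neg hb, if_neg]
        rintro ⟨hb0, hb1⟩
        omega
      rw [this, mul_zero]
    · intro habs; exact absurd (Finset.mem_univ i') habs
  · rw [if_neg (by omega)]
    have hi1 : 1 ≤ i'.1 := by omega
    have ha2 : i'.1 - 1 < 2*N := by have := i'.2; omega
    have hane : (⟨i'.1 - 1, ha2⟩ : Fin (2*N)) ≠ i' := by
      simp only [ne_eq, Fin.ext_iff]
      show ¬(i'.1 - 1 = i'.1)
      omega
    rw [show (∑ i, ((Dm N x).map (Polynomial.eval 0)) j i * E'm N x w i i')
          = ∑ i ∈ ({⟨i'.1 - 1, ha2⟩, i'} : Finset (Fin (2*N))),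
              ((Dm N x).map (Polynomial.eval 0)) j i * E'm N x w i i' from
        (Finset.sum_subset (Finset.subset_univ _) ?_).symm]
    · rw [Finset.sum_pair hane]
      have hka : k2 N (⟨i'.1 - 1, ha2⟩ : Fin (2*N)) = k2 N i' := by
        apply Fin.ext; simp only [val_k2]; show (i'.1-1)/2 = i'.1/2; omega
      have hEa : E'm N x w ⟨i'.1 - 1, ha2⟩ i' = w (k2 N i') := by
        show (if (⟨i'.1 - 1, ha2⟩ : Fin (2*N)) = i' then _
          else if (i'.1-1) % 2 = 0 ∧ i'.1 = (i'.1-1) + 1 then w (k2 N ⟨i'.1 - 1, ha2⟩) else 0)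
          = w (k2 N i')
        rw [if_neg hane, if_pos ⟨by omega, by omega⟩, hka]
      have hEi : E'm N x w i' i' = w (k2 N i') * x (k2 N i') := by
        show (if i' = i' then (if i'.1 % 2 = 0 then _ else w (k2 N i') * x (k2 N i')) else _) = _
        rw [if_pos rfl, if_neg (by omega)]
      rw [Matrix.map_apply, Matrix.map_apply, hEa, hEi,
        eval_Dm_even N x j ⟨i'.1 - 1, ha2⟩ (by show (i'.1-1) % 2 = 0; omega),
        eval_Dm_odd N x j i' h1, hka]
      have hxk : x (k2 N i') = x ⟨i'.1 / 2, by have := i'.2; omega⟩ := rfl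
      have hwk : w (k2 N i') = w ⟨i'.1 / 2, by have := i'.2; omega⟩ := rfl
      rw [← hxk, ← hwk]
      rcases Nat.eq_zero_or_pos j.1 with hj | hj
      · simp [hj]
      · have hc : x (k2 N i') ^ (j.1 - 1) * x (k2 N i') = x (k2 N i') ^ j.1 := by
          rw [← pow_succ]; congr 1; omega
        linear_combination (-((j.1 : ℝ) * w (k2 N i'))) * hc
    · intro b _ hb
      have : E'm N x w b i' = 0 := by
        simp only [Finset.mem_insert, Finset.mem_singleton, not_or] at hb
        show (if b = i' then _ else if b.1 % 2 = 0 ∧ i'.1 = b.1 + 1 then w (k2 N b) else 0) = 0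
        rw [if_neg hb.2, if_neg]
        rintro ⟨hb0, hb1⟩
        apply hb.1
        apply Fin.ext
        show b.1 = i'.1 - 1
        omega
      rw [this, mul_zero]

lemma um_even (k : Fin N) :
    um N x ⟨2*k.1, by have := k.2; omega⟩ = Polynomial.C (x k) := by
  have hk : k2 N (⟨2*k.1, by have := k.2; omega⟩ : Fin (2*N)) = k := by
    apply Fin.ext; simp only [val_k2]; show 2*k.1/2 = k.1; omega
  simp only [um, hk]
  rw [if_pos (by show 2*k.1 % 2 = 0; omega), add_zero]

lemma um_odd (k : Fin N) :
    um N x ⟨2*k.1+1, by have := k.2; omega⟩ = Polynomial.C (x k) + Polynomial.X := by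
  have hk : k2 N (⟨2*k.1+1, by have := k.2; omega⟩ : Fin (2*N)) = k := by
    apply Fin.ext; simp only [val_k2]; show (2*k.1+1)/2 = k.1; omega
  simp only [um, hk]
  rw [if_neg (by show ¬(2*k.1+1) % 2 = 0; omega)]

theorem det_Dm : (Dm N x).det
    = ∏ k : Fin N, ∏ l ∈ Finset.Ioi k,
        ((Polynomial.C (x l) - Polynomial.C (x k)) *
         (Polynomial.C (x l) + Polynomial.X - Polynomial.C (x k)) *
         ((Polynomial.C (x l) - (Polynomial.C (x k) + Polynomial.X)) *
          (Polynomial.C (x l) + Polynomial.X - (Polynomial.C (x k) + Polynomial.X)))) := by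
  have h1 : (Matrix.vandermonde (um N x)).det = (Dm N x).det * (Em N).det := by
    rw [← Matrix.det_transpose (Matrix.vandermonde (um N x)), vand_eq, Matrix.det_mul]
  rw [Matrix.det_vandermonde, det_Em] at h1
  rw [prodIoiPair N (fun i j => um N x j - um N x i)] at h1
  have hsame : ∀ k : Fin N,
      um N x ⟨2*k.1+1, by have := k.2; omega⟩ - um N x ⟨2*k.1, by have := k.2; omega⟩
      = Polynomial.X := by
    intro k
    rw [um_even, um_odd]
    ring
  rw [Finset.prod_congr rfl (fun k _ => hsame k), Finset.prod_const, Finset.card_univ,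
    Fintype.card_fin] at h1
  have hcross : ∀ k : Fin N, ∀ l ∈ Finset.Ioi k,
      ((um N x ⟨2*l.1, by have := l.2; omega⟩ - um N x ⟨2*k.1, by have := k.2; omega⟩) *
       (um N x ⟨2*l.1+1, by have := l.2; omega⟩ - um N x ⟨2*k.1, by have := k.2; omega⟩) *
       ((um N x ⟨2*l.1, by have := l.2; omega⟩ - um N x ⟨2*k.1+1, by have := k.2; omega⟩) *
        (um N x ⟨2*l.1+1, by have := l.2; omega⟩ - um N x ⟨2*k.1+1, by have := k.2; omega⟩)))
      = ((Polynomial.C (x l) - Polynomial.C (x k)) *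
         (Polynomial.C (x l) + Polynomial.X - Polynomial.C (x k)) *
         ((Polynomial.C (x l) - (Polynomial.C (x k) + Polynomial.X)) *
          (Polynomial.C (x l) + Polynomial.X - (Polynomial.C (x k) + Polynomial.X)))) := by
    intro k l _
    rw [um_even, um_odd, um_even, um_odd]
  rw [Finset.prod_congr rfl (fun k _ => Finset.prod_congr rfl (hcross k))] at h1
  have hX : (Polynomial.X : Polynomial ℝ) ^ N ≠ 0 :=
    pow_ne_zero _ Polynomial.X_ne_zero
  apply mul_left_cancel₀ hX
  rw [h1, mul_comm]

theorem det_Dm_eval : ((Dm N x).map (Polynomial.eval 0)).det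
    = ∏ k : Fin N, ∏ l ∈ Finset.Ioi k, (x l - x k) ^ 4 := by
  have : (Dm N x).map (Polynomial.eval 0) = (Polynomial.evalRingHom 0).mapMatrix (Dm N x) := by
    rw [RingHom.mapMatrix_apply, Polynomial.coe_evalRingHom]
  rw [this, ← RingHom.map_det, det_Dm]
  rw [map_prod]
  refine Finset.prod_congr rfl fun k _ => ?_
  rw [map_prod]
  refine Finset.prod_congr rfl fun l _ => ?_
  simp only [_root_.map_mul, _root_.map_sub, _root_.map_add, Polynomial.coe_evalRingHom,
    Polynomial.eval_C, Polynomial.eval_X, Polynomial.eval_add, Polynomial.eval_sub,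
    Polynomial.eval_mul]
  ring

end MomentAux

/-- The Jacobian determinant of `(x₁,w₁,…,x_N,w_N) ↦ (m₁,…,m_{2N})` equals
`(∏ w_k)·(∏ x_k²)·Δ(x₁,…,x_N)⁴` where `Δ` is the Vandermonde determinant
`∏_{j<k} (x_j - x_k)`. -/
theorem momentJacobian_det (N : ℕ) (hN : 0 < N) (x w : Fin N → ℝ)
    (hx : StrictMono x) (hx01 : ∀ k, x k ∈ Set.Ioo (0 : ℝ) 1)
    (hw : ∀ k, 0 < w k) (hw1 : ∑ k, w k ≤ 1) :
    (momentJacobian N x w).det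
      = (∏ k, w k) * (∏ k, x k ^ 2) *
          (∏ j, ∏ k ∈ Finset.Ioi j, (x j - x k)) ^ 4 := by
  rw [MomentAux.jac_eq N x w, Matrix.det_mul, MomentAux.det_Dm_eval, MomentAux.det_E'm]
  have h4 : (∏ j, ∏ k ∈ Finset.Ioi j, (x j - x k)) ^ 4
      = ∏ j, ∏ k ∈ Finset.Ioi j, (x j - x k) ^ 4 := by
    rw [← Finset.prod_pow]
    exact Finset.prod_congr rfl fun j _ => (Finset.prod_pow _ _ _).symm
  have h5 : (∏ j, ∏ k ∈ Finset.Ioi j, (x j - x k) ^ 4)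
      = ∏ k, ∏ l ∈ Finset.Ioi k, (x l - x k) ^ 4 :=
    Finset.prod_congr rfl fun j _ => Finset.prod_congr rfl fun k _ => by ring
  rw [h4, h5]
  ring
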